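/- arXiv:2011.00166 — 6 statements merged into one kernel-verified Lean document; each statement's English description precedes it below -/
import Mathlib

section
/- Let X be a group, and let x, y ∈ X satisfy x⁻¹yx = y⁻¹. Then for every i ≥ 0, the element y^(2^i) lies in the (i+1)-st term of the lower central series of X. -/
open scoped commutatorElement

section InvertedByConjugation

variable {G : Type*} [Group G] {x z : G}

theorem inv_mul_pow_mul_eq_inv_pow (h : x⁻¹ * z * x = z⁻¹) (n : ℕ) :
    x⁻¹ * z ^ n * x = (z ^ n)⁻¹ := by
  have := conj_pow (a := x⁻¹) (b := z) (i := n)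
  rw [inv_inv] at this
  rw [← this, h, inv_pow]

theorem sq_eq_commutatorElement_inv (h : x⁻¹ * z * x = z⁻¹) : z ^ 2 = ⁅z, x⁻¹⁆ := by
  calc z ^ 2 = z * (x⁻¹ * z * x)⁻¹ := by rw [h, inv_inv, sq]
    _ = ⁅z, x⁻¹⁆ := by rw [commutatorElement_def]; group

end InvertedByConjugation

-- Mathlib's `lowerCentralSeries X i` is γ_{i+1}.
/-- If `x⁻¹ y x = y⁻¹` in a group `X`, then `y ^ (2 ^ i)` lies in the `(i+1)`-st term
of the lower central series of `X` (here `lowerCentralSeries X i` is γ_{i+1}). -/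
theorem stmt_0 {X : Type*} [Group X] (x y : X) (h : x⁻¹ * y * x = y⁻¹) :
    ∀ i : ℕ, y ^ (2 ^ i) ∈ (⊤ : Subgroup X).lowerCentralSeries i := by
  intro i
  induction i with
  | zero => simp
  | succ i ih =>
    rw [pow_succ, pow_mul, sq_eq_commutatorElement_inv (inv_mul_pow_mul_eq_inv_pow h _),
      Subgroup.lowerCentralSeries_succ]
    exact Subgroup.commutator_mem_commutator ih (Subgroup.mem_top _)
end

section
/- Let X be a nilpotent group, and let x, y ∈ X satisfy x⁻¹yx = y⁻¹. If y has finite odd order, then y = 1. -/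
/-!
Induct on the nilpotency class. Modulo the centre the hypotheses persist (the order of the
image of `y` divides that of `y`, so stays odd), hence `y` is central by induction; a central
element inverted by conjugation satisfies `y ^ 2 = 1`, which forces `y = 1` as its order is odd.
-/

theorem eq_one_of_pow_two_eq_one_of_odd_orderOf {M : Type*} [Monoid M] {y : M}
    (hy : y ^ 2 = 1) (hodd : Odd (orderOf y)) : y = 1 := by
  have hdvd : orderOf y ∣ 2 := orderOf_dvd_of_pow_eq_one hy
  rw [← orderOf_eq_one_iff]
  rcases (Nat.dvd_prime Nat.prime_two).mp hdvd with h1 | h2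
  · exact h1
  · exact absurd hodd (by simp [h2])

theorem pow_two_eq_one_of_conj_eq_inv_of_mem_center {G : Type*} [Group G] {x y : G}
    (h : x⁻¹ * y * x = y⁻¹) (hy : y ∈ Subgroup.center G) : y ^ 2 = 1 := by
  rw [mul_assoc, ← Subgroup.mem_center_iff.mp hy x, ← mul_assoc, inv_mul_cancel, one_mul] at h
  rwa [pow_two, mul_eq_one_iff_eq_inv]

theorem Group.IsNilpotent.eq_one_of_conj_eq_inv_of_odd_orderOf {G : Type*} [Group G]
    [Group.IsNilpotent G] {x y : G} (h : x⁻¹ * y * x = y⁻¹) (hodd : Odd (orderOf y)) :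
    y = 1 := by
  revert x y
  refine nilpotent_center_quotient_ind
    (P := fun G _ _ => ∀ {x y : G}, x⁻¹ * y * x = y⁻¹ → Odd (orderOf y) → y = 1) G ?_ ?_
  · intro G _ _ x y _ _
    exact Subsingleton.elim _ _
  · intro G _ _ ih x y h hodd
    have hcenter : y ∈ Subgroup.center G := by
      rw [← QuotientGroup.eq_one_iff]
      refine ih (x := (x : G ⧸ Subgroup.center G)) ?_ ?_
      · rw [← QuotientGroup.mk_inv, ← QuotientGroup.mk_mul, ← QuotientGroup.mk_mul, h,
          QuotientGroup.mk_inv]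
      · exact hodd.of_dvd_nat (orderOf_map_dvd (QuotientGroup.mk' _) y)
    exact eq_one_of_pow_two_eq_one_of_odd_orderOf
      (pow_two_eq_one_of_conj_eq_inv_of_mem_center h hcenter) hodd

theorem stmt_2_general {X : Type*} [Group X] [Group.IsNilpotent X] (x y : X)
    (h : x⁻¹ * y * x = y⁻¹) (hodd : Odd (orderOf y)) :
    y = 1 :=
  Group.IsNilpotent.eq_one_of_conj_eq_inv_of_odd_orderOf h hodd

/-- In a nilpotent group, an element of finite odd order that is inverted by
conjugation is trivial. -/
theorem stmt_2 {X : Type*} [Group X] [Group.IsNilpotent X] (x y : X)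
    (h : x⁻¹ * y * x = y⁻¹) (hfin : IsOfFinOrder y) (hodd : Odd (orderOf y)) :
    y = 1 :=
  stmt_2_general x y h hodd
end

section
/- Let C be a class of groups containing a nontrivial group and closed under taking subgroups, extensions, and Cartesian (unrestricted direct) powers ∏_{y ∈ Y} X indexed by any Y ∈ C for any X ∈ C. If every group in C is periodic, then every group in C has finite exponent. -/
theorem Monoid.ExponentExists.of_isOfFinOrder_id {G : Type*} [Monoid G]
    (h : IsOfFinOrder (id : G → G)) : Monoid.ExponentExists G := by
  obtain ⟨n, hn, hid⟩ := h.exists_pow_eq_one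
  exact ⟨n, hn, fun g => congrFun hid g⟩

theorem stmt_4_general (C : (G : Type) → [inst : Group G] → Prop)
    (hpow : ∀ (X Y : Type) [Group X] [Group Y], C X → C Y → C (Y → X))
    (hper : ∀ (G : Type) [Group G], C G → ∀ g : G, IsOfFinOrder g)
    (G : Type) [Group G] (hG : C G) :
    ∃ n : ℕ, 0 < n ∧ ∀ g : G, g ^ n = 1 :=
  Monoid.ExponentExists.of_isOfFinOrder_id (hper (G → G) (hpow G G hG hG) id)

/-- If `C` is a root class (contains a nontrivial group; closed under subgroups,
extensions, and Cartesian powers `Y → X` for `X, Y ∈ C`) all of whose groups are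
periodic, then every group in `C` has finite exponent. -/
theorem stmt_4 (C : (G : Type) → [inst : Group G] → Prop)
    (hnontriv : ∃ (G : Type) (_ : Group G), C G ∧ Nontrivial G)
    (hsub : ∀ (G : Type) [Group G], C G → ∀ H : Subgroup G, C H)
    (hext : ∀ (G : Type) [Group G] (N : Subgroup G) [N.Normal],
      C N → C (G ⧸ N) → C G)
    (hpow : ∀ (X Y : Type) [Group X] [Group Y], C X → C Y → C (Y → X))
    (hper : ∀ (G : Type) [Group G], C G → ∀ g : G, IsOfFinOrder g)
    (G : Type) [Group G] (hG : C G) :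
    ∃ n : ℕ, 0 < n ∧ ∀ g : G, g ^ n = 1 :=
  stmt_4_general C hpow hper G hG
end

section
/- Let P(m,n) = ⟨x, y | xᵐ = yⁿ⟩ with |m| > 1 and |n| > 1, and let C be a class of groups consisting only of periodic groups, with ρ(C) the set of primes dividing orders of elements of groups in C. If P(m,n) is residually a C-group, then both m and n are ρ(C)-numbers. -/
/-- The defining relation of `P(m,n) = ⟨x, y | xᵐ = yⁿ⟩`, with `x` encoded as `true`
and `y` as `false`. -/
def pRel (m n : ℤ) : Set (FreeGroup Bool) :=
  {FreeGroup.of true ^ m * (FreeGroup.of false ^ n)⁻¹}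

/-- The set `ρ(C)` of primes dividing the order of some element of some group in the
class `C`. -/
def rhoSet (C : (G : Type) → [inst : Group G] → Prop) : Set ℕ :=
  {p | ∃ (X : Type) (_ : Group X), C X ∧ ∃ x : X, p ∣ orderOf x ∧ IsOfFinOrder x}

/-!
Suppose a prime `q` divides `m = q * k` but lies outside `ρ(C)`. In a `C`-image of `P(m,n)` the
image of `x` then has order prime to `q`, so the image of `xᵏ` is a power of the image of
`xᵐ = yⁿ` and commutes with the image of `y`: the commutator `⁅xᵏ, y⁆` dies in every `C`-image.
It is nontrivial in `P(m,n)`: in the amalgamated product of two copies of `ℤ` over `ℤ`, embedded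
as `mℤ` and `nℤ`, the image of `⁅xᵏ, y⁆` is a reduced word of length four since `m ∤ k` and
`n ∤ 1`, so it is not `1` by the normal form theorem.
-/

open Function Monoid
open scoped commutatorElement

namespace Monoid.PushoutI

variable {ι : Type*} {G : ι → Type*} {H : Type*} [∀ i, Group (G i)] [Group H]
  {φ : ∀ i, H →* G i}

theorem commutatorElement_of_of_ne_one (hφ : ∀ i, Injective (φ i)) {i j : ι} (hij : i ≠ j)
    {g : G i} {h : G j} (hg : g ∉ (φ i).range) (hh : h ∉ (φ j).range) :
    ⁅PushoutI.of (φ := φ) i g, PushoutI.of (φ := φ) j h⁆ ≠ 1 := by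
  have hg1 : g ≠ 1 := fun h1 => hg (h1 ▸ one_mem _)
  have hh1 : h ≠ 1 := fun h1 => hh (h1 ▸ one_mem _)
  let w : CoprodI.Word G :=
    ⟨[⟨i, g⟩, ⟨j, h⟩, ⟨i, g⁻¹⟩, ⟨j, h⁻¹⟩], by simp [hg1, hh1], by simp [hij, hij.symm]⟩
  have hw : Reduced φ w := by
    simp only [w, Reduced, List.mem_cons, List.not_mem_nil, or_false, forall_eq_or_imp,
      forall_eq, inv_mem_iff]
    exact ⟨hg, hh, hg, hh⟩
  intro hcomm
  have := hw.eq_empty_of_mem_range hφ ⟨1, by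
    simp [w, CoprodI.Word.prod, ← mul_assoc, ← commutatorElement_def, hcomm]⟩
  simp [w, CoprodI.Word.empty] at this

end Monoid.PushoutI

theorem ofAdd_mem_range_zpowGroupHom_iff (c a : ℤ) :
    Multiplicative.ofAdd a ∈ (zpowGroupHom (α := Multiplicative ℤ) c).range ↔ c ∣ a := by
  simp only [MonoidHom.mem_range, zpowGroupHom_apply]
  constructor
  · rintro ⟨b, hb⟩
    exact ⟨b.toAdd, by rw [← toAdd_ofAdd a, ← hb, toAdd_zpow, smul_eq_mul, mul_comm]⟩
  · rintro ⟨b, rfl⟩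
    exact ⟨.ofAdd b, by rw [← ofAdd_zsmul, smul_eq_mul, mul_comm]⟩

theorem mul_dvd_self_iff_isUnit {M : Type*} [CommMonoidWithZero M] [IsCancelMulZero M] {a b : M}
    (hb : b ≠ 0) : a * b ∣ b ↔ IsUnit a := by
  simpa [isUnit_iff_dvd_one] using mul_dvd_mul_iff_right hb (a := a) (b := 1)

theorem commute_zpow_of_coprime_orderOf {G : Type*} [Group G] {u v : G} {q : ℕ}
    (hq : q.Coprime (orderOf u)) {k N : ℤ} (huv : u ^ ((q : ℤ) * k) = v ^ N) :
    Commute (u ^ k) v := by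
  obtain ⟨s, t, hst⟩ : IsCoprime (q : ℤ) (orderOf u : ℤ) := Int.isCoprime_iff_gcd_eq_one.2 hq
  have huk : u ^ k = v ^ (N * s) := by
    calc u ^ k = u ^ (k * (s * q + t * (orderOf u : ℤ))) := by rw [hst, mul_one]
    _ = (u ^ ((q : ℤ) * k)) ^ s * (u ^ (orderOf u : ℤ)) ^ (k * t) := by
        rw [← zpow_mul, ← zpow_mul, ← zpow_add]; ring_nf
    _ = v ^ (N * s) := by rw [zpow_natCast, pow_orderOf_eq_one, one_zpow, mul_one, huv, zpow_mul]
  rw [huk]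
  exact (Commute.refl v).zpow_left _

theorem mem_rhoSet_of_commutatorElement_ne_one {G : Type} [Group G]
    (C : (G : Type) → [Group G] → Prop)
    (hper : ∀ (G : Type) [Group G], C G → ∀ g : G, IsOfFinOrder g)
    (hres : ∀ g : G, g ≠ 1 → ∃ (P : Type) (_ : Group P) (σ : G →* P), C P ∧ σ g ≠ 1)
    {u v : G} {q : ℕ} (hq : q.Prime) {k N : ℤ} (huv : u ^ ((q : ℤ) * k) = v ^ N)
    (hne : ⁅u ^ k, v⁆ ≠ 1) : q ∈ rhoSet C := by
  obtain ⟨P, _, σ, hCP, hσ⟩ := hres _ hne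
  by_contra hq_not_mem
  have hσu : IsOfFinOrder (σ u) := hper P hCP (σ u)
  have hcop : q.Coprime (orderOf (σ u)) :=
    hq.coprime_iff_not_dvd.2 fun hdvd => hq_not_mem ⟨P, _, hCP, σ u, hdvd, hσu⟩
  have hcomm := commute_zpow_of_coprime_orderOf hcop (v := σ v)
    (by rw [← map_zpow, huv, map_zpow])
  rw [map_commutatorElement, map_zpow] at hσ
  exact hσ (commutatorElement_eq_one_iff_commute.2 hcomm)

namespace pRel

variable (m n : ℤ)

def diagram (b : Bool) : Multiplicative ℤ →* Multiplicative ℤ := zpowGroupHom (cond b m n)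

theorem of_zpow_eq_of_zpow (i : Bool) :
    (PresentedGroup.of i : PresentedGroup (pRel m n)) ^ cond i m n =
      PresentedGroup.of (!i) ^ cond (!i) m n := by
  have h : PresentedGroup.mk (pRel m n) (FreeGroup.of true ^ m) =
      PresentedGroup.mk (pRel m n) (FreeGroup.of false ^ n) :=
    PresentedGroup.mk_eq_mk_of_mul_inv_mem rfl
  rw [map_zpow, map_zpow] at h
  cases i
  · exact h.symm
  · exact h

noncomputable def toPushout : PresentedGroup (pRel m n) →* PushoutI (diagram m n) :=
  PresentedGroup.toGroup (f := fun b => PushoutI.of b (.ofAdd 1)) <| by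
    rintro r rfl
    have hb (b : Bool) : (PushoutI.of (φ := diagram m n) b (.ofAdd 1)) ^ cond b m n
        = PushoutI.base (diagram m n) (.ofAdd 1) := by
      rw [← PushoutI.of_apply_eq_base _ b, ← map_zpow]
      rfl
    simpa [mul_inv_eq_one] using (hb true).trans (hb false).symm

theorem toPushout_of_zpow (b : Bool) (k : ℤ) :
    toPushout m n (PresentedGroup.of b ^ k) = PushoutI.of b (.ofAdd k) := by
  rw [map_zpow, toPushout, PresentedGroup.toGroup.of, ← map_zpow, ← ofAdd_zsmul, smul_eq_mul,
    mul_one]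

variable {m n}

theorem commutatorElement_of_zpow_of_zpow_ne_one (hm : m ≠ 0) (hn : n ≠ 0) (i : Bool)
    {k l : ℤ} (hk : ¬cond i m n ∣ k) (hl : ¬cond (!i) m n ∣ l) :
    ⁅(PresentedGroup.of i : PresentedGroup (pRel m n)) ^ k,
      (PresentedGroup.of (!i) : PresentedGroup (pRel m n)) ^ l⁆ ≠ 1 := by
  have hinj (b : Bool) : Injective (diagram m n b) :=
    zpow_left_injective (by cases b <;> assumption)
  intro h
  apply PushoutI.commutatorElement_of_of_ne_one hinj (Bool.not_ne_self i).symm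
    ((ofAdd_mem_range_zpowGroupHom_iff _ k).not.2 hk)
    ((ofAdd_mem_range_zpowGroupHom_iff _ l).not.2 hl)
  simpa only [map_commutatorElement, toPushout_of_zpow, map_one] using
    congrArg (toPushout m n) h

theorem mem_rhoSet_of_dvd (habs : ∀ b : Bool, 1 < |cond b m n|)
    (C : (G : Type) → [Group G] → Prop)
    (hper : ∀ (G : Type) [Group G], C G → ∀ g : G, IsOfFinOrder g)
    (hres : ∀ g : PresentedGroup (pRel m n), g ≠ 1 →
      ∃ (P : Type) (_ : Group P) (σ : PresentedGroup (pRel m n) →* P), C P ∧ σ g ≠ 1)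
    {q : ℕ} (hq : q.Prime) (i : Bool) (hdvd : (q : ℤ) ∣ cond i m n) : q ∈ rhoSet C := by
  have hne (b : Bool) : cond b m n ≠ 0 := fun h => by simpa [h] using habs b
  have hnot_isUnit (b : Bool) : ¬IsUnit (cond b m n) := fun h => by
    simpa [Int.isUnit_iff_abs_eq.1 h] using habs b
  obtain ⟨k, hk⟩ := hdvd
  have hk0 : k ≠ 0 := by rintro rfl; exact hne i (by simpa using hk)
  have hqk : ¬cond i m n ∣ k := by
    rw [hk, mul_dvd_self_iff_isUnit hk0]
    exact (Nat.prime_iff_prime_int.1 hq).not_isUnit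
  have hcomm := commutatorElement_of_zpow_of_zpow_ne_one (hne true) (hne false) i hqk
    (l := 1) (mt isUnit_of_dvd_one (hnot_isUnit (!i)))
  rw [zpow_one] at hcomm
  exact mem_rhoSet_of_commutatorElement_ne_one C hper hres hq
    (hk ▸ of_zpow_eq_of_zpow m n i) hcomm

end pRel

/-- If `|m|, |n| > 1`, `C` is a class of periodic groups, and
`P(m,n) = ⟨x, y | xᵐ = yⁿ⟩` is residually a `C`-group, then every prime dividing `m`
or `n` lies in `ρ(C)`, i.e. `m` and `n` are `ρ(C)`-numbers. -/
theorem stmt_9 (m n : ℤ) (hm : 1 < |m|) (hn : 1 < |n|)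
    (C : (G : Type) → [inst : Group G] → Prop)
    (hper : ∀ (G : Type) [Group G], C G → ∀ g : G, IsOfFinOrder g)
    (hres : ∀ g : PresentedGroup (pRel m n), g ≠ 1 →
      ∃ (P : Type) (_ : Group P) (σ : PresentedGroup (pRel m n) →* P),
        C P ∧ Function.Surjective σ ∧ σ g ≠ 1)
    (q : ℕ) (hq : q.Prime) (hdvd : (q : ℤ) ∣ m ∨ (q : ℤ) ∣ n) :
    q ∈ rhoSet C := by
  have habs : ∀ b : Bool, 1 < |cond b m n| := by rintro (_ | _) <;> assumption
  have hres' (g : PresentedGroup (pRel m n)) (hg : g ≠ 1) :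
      ∃ (P : Type) (_ : Group P) (σ : PresentedGroup (pRel m n) →* P), C P ∧ σ g ≠ 1 :=
    let ⟨P, _, σ, hCP, _, hσ⟩ := hres g hg
    ⟨P, _, σ, hCP, hσ⟩
  rcases hdvd with hdvd | hdvd
  · exact pRel.mem_rhoSet_of_dvd habs C hper hres' hq true hdvd
  · exact pRel.mem_rhoSet_of_dvd habs C hper hres' hq false hdvd
end

section
/- Every free group is residually torsion-free nilpotent. -/
/-!
Magnus' argument, made finite. Write `g ≠ 1` in syllable form `a₁ ^ e₁ ⋯ aₖ ^ eₖ` with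
consecutive letters distinct and all `eᵢ ≠ 0`, and let `w = a₁ ⋯ aₖ`. Sending `a` to `1 + Nₐ`,
where `Nₐ` is the `(k + 1) × (k + 1)` integer matrix with `(i, i + 1)` entry `1` exactly when
`wᵢ = a`, defines a representation of the free group by upper unitriangular matrices. Since
`Nₐ² = 0`, the syllable `a ^ e` acts as `1 + e • Nₐ`, and the corner entry of the image of `g` is
`e₁ ⋯ eₖ ≠ 0`, so `g` survives. The unitriangular group is nilpotent (the superdiagonal filtration
is multiplicative, so commutators go one step deeper) and torsion-free (if `u - 1` lies in the
`k`-th step, then `u ^ m - 1 ≡ m • (u - 1)` modulo the next one).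
-/

open scoped commutatorElement

structure IsDescendingRingFiltration {A : Type*} [Ring A] (I : ℕ → AddSubgroup A) : Prop where
  antitone : Antitone I
  mul_mem {i j : ℕ} {x y : A} : x ∈ I i → y ∈ I j → x * y ∈ I (i + j)

namespace IsDescendingRingFiltration

variable {A : Type*} [Ring A] {I : ℕ → AddSubgroup A} (hI : IsDescendingRingFiltration I)
include hI

lemma mul_sub_one_mem {k : ℕ} {u v : A} (hu : u - 1 ∈ I k) (hv : v - 1 ∈ I k) :
    u * v - 1 ∈ I k := by
  have : u * v - 1 = (u - 1) * (v - 1) + (u - 1) + (v - 1) := by noncomm_ring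
  rw [this]
  exact add_mem (add_mem (hI.antitone (Nat.le_add_right k k) (hI.mul_mem hu hv)) hu) hv

/-- The condition on `u⁻¹` is not automatic, as the `I k` need not be ideals of `A`. -/
def principalUnits (k : ℕ) : Subgroup Aˣ where
  carrier := {u | (u : A) - 1 ∈ I k ∧ ((u⁻¹ : Aˣ) : A) - 1 ∈ I k}
  one_mem' := by simp
  mul_mem' hu hv := by
    refine ⟨?_, ?_⟩
    · simpa using hI.mul_sub_one_mem hu.1 hv.1
    · simpa using hI.mul_sub_one_mem hv.2 hu.2
  inv_mem' hu := by simpa [and_comm] using hu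

lemma val_commutatorElement_sub_one_mem {i j : ℕ} {u v : Aˣ}
    (hu : u ∈ hI.principalUnits i) (hv : v ∈ hI.principalUnits j) :
    ((⁅u, v⁆ : Aˣ) : A) - 1 ∈ I (i + j) := by
  set y : A := ((u⁻¹ * v⁻¹ : Aˣ) : A) - 1
  have hy : y ∈ I 0 :=
    hI.mul_sub_one_mem (hI.antitone (Nat.zero_le i) (inv_mem hu).1)
      (hI.antitone (Nat.zero_le j) (inv_mem hv).1)
  have hcomm : (u : A) * v - v * u ∈ I (i + j) := by
    have : (u : A) * v - v * u
        = ((u : A) - 1) * ((v : A) - 1) - ((v : A) - 1) * ((u : A) - 1) := by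
      noncomm_ring
    rw [this]
    exact sub_mem (hI.mul_mem hu.1 hv.1) (add_comm j i ▸ hI.mul_mem hv.1 hu.1)
  have : ((⁅u, v⁆ : Aˣ) : A) - 1 = ((u : A) * v - v * u) + ((u : A) * v - v * u) * y := by
    rw [← mul_one_add, add_sub_cancel, commutatorElement_def]
    simp [sub_mul, mul_assoc]
  rw [this]
  exact add_mem hcomm (by simpa using hI.mul_mem hcomm hy)

lemma commutatorElement_mem_principalUnits {i j : ℕ} {u v : Aˣ}
    (hu : u ∈ hI.principalUnits i) (hv : v ∈ hI.principalUnits j) :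
    ⁅u, v⁆ ∈ hI.principalUnits (i + j) := by
  refine ⟨hI.val_commutatorElement_sub_one_mem hu hv, ?_⟩
  rw [commutatorElement_inv, add_comm]
  exact hI.val_commutatorElement_sub_one_mem hv hu

lemma principalUnits_eq_bot {n : ℕ} (hn : I n = ⊥) : hI.principalUnits n = ⊥ := by
  refine eq_bot_iff.mpr fun u hu => ?_
  have hu := hu.1
  rw [hn, AddSubgroup.mem_bot, sub_eq_zero] at hu
  exact Subgroup.mem_bot.mpr (Units.ext hu)

lemma isNilpotent_principalUnits {n : ℕ} (hn : I n = ⊥) :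
    Group.IsNilpotent (hI.principalUnits 1) := by
  rw [Subgroup.nilpotent_iff_finite_descending_central_series]
  refine ⟨n, fun k => (hI.principalUnits (k + 1)).subgroupOf (hI.principalUnits 1),
    ⟨Subgroup.subgroupOf_self _, fun x k hx g => ?_⟩, ?_⟩
  · rw [Subgroup.mem_subgroupOf] at hx ⊢
    simpa [commutatorElement_def] using hI.commutatorElement_mem_principalUnits hx g.2
  · refine eq_bot_iff.mpr fun x hx => ?_
    have hx := Subgroup.mem_subgroupOf.mp hx
    have : (x : Aˣ) ∈ hI.principalUnits n :=
      ⟨hI.antitone (Nat.le_succ n) hx.1, hI.antitone (Nat.le_succ n) hx.2⟩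
    rw [hI.principalUnits_eq_bot hn, Subgroup.mem_bot] at this
    exact Subgroup.mem_bot.mpr (Subtype.ext this)

lemma one_add_pow_sub_one_sub_nsmul_mem {k : ℕ} (hk : 1 ≤ k) {x : A} (hx : x ∈ I k) (m : ℕ) :
    (1 + x) ^ m - 1 - m • x ∈ I (k + 1) := by
  induction m with
  | zero => simp
  | succ m ih =>
    have : (1 + x) ^ (m + 1) - 1 - (m + 1) • x
        = ((1 + x) ^ m - 1 - m • x) + ((1 + x) ^ m - 1 - m • x) * x + m • (x * x) := by
      simp only [pow_succ, add_smul, one_smul, nsmul_eq_mul]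
      noncomm_ring
    rw [this]
    refine add_mem (add_mem ih (hI.antitone (by omega) (hI.mul_mem ih hx))) (nsmul_mem ?_ m)
    exact hI.antitone (by omega) (hI.mul_mem hx hx)

lemma eq_one_of_isOfFinOrder {n : ℕ} (hn : I n = ⊥)
    (hgr : ∀ {k m : ℕ} {x : A}, m ≠ 0 → x ∈ I k → m • x ∈ I (k + 1) → x ∈ I (k + 1))
    {u : Aˣ} (hu : u ∈ hI.principalUnits 1) (hfin : IsOfFinOrder u) : u = 1 := by
  obtain ⟨m, hm, hum⟩ := hfin.exists_pow_eq_one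
  set x : A := (u : A) - 1
  have hpow : (1 + x) ^ m = 1 := by
    rw [add_sub_cancel, ← Units.val_pow_eq_pow_val, hum, Units.val_one]
  have hx : ∀ k, x ∈ I (k + 1) := by
    intro k
    induction k with
    | zero => exact hu.1
    | succ k ih =>
      refine hgr hm.ne' ih ?_
      have := neg_mem (hI.one_add_pow_sub_one_sub_nsmul_mem (Nat.le_add_left 1 k) ih m)
      rwa [hpow, sub_self, zero_sub, neg_neg] at this
  have := hI.antitone (Nat.le_succ n) (hx n)
  rw [hn, AddSubgroup.mem_bot, sub_eq_zero] at this
  exact Units.ext this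

end IsDescendingRingFiltration

def Units.oneAddOfMulSelfEqZero {A : Type*} [Ring A] {x : A} (hx : x * x = 0) : Aˣ where
  val := 1 + x
  inv := 1 - x
  val_inv := by rw [add_mul, one_mul, mul_sub, mul_one, hx, sub_zero, sub_add_cancel]
  inv_val := by rw [sub_mul, one_mul, mul_add, mul_one, hx, add_zero, add_sub_cancel_right]

lemma Units.val_oneAddOfMulSelfEqZero_zpow {A : Type*} [Ring A] {x : A} (hx : x * x = 0)
    (e : ℤ) : ((Units.oneAddOfMulSelfEqZero hx ^ e : Aˣ) : A) = 1 + e • x := by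
  induction e using Int.induction_on with
  | zero => simp
  | succ e ih =>
    rw [zpow_add_one, Units.val_mul, ih]
    show (1 + _ • x) * (1 + x) = _
    rw [mul_one_add, add_mul, one_mul, smul_mul_assoc, hx, smul_zero, add_smul, one_smul]
    abel
  | pred e ih =>
    rw [zpow_sub_one, Units.val_mul, ih]
    show (1 + _ • x) * (1 - x) = _
    rw [mul_sub, mul_one, one_add_mul, smul_mul_assoc, hx, smul_zero, add_zero, sub_smul, one_smul]
    abel

namespace Matrix

variable (R : Type*) [Ring R] (m : ℕ)

def strictUpperFiltration (k : ℕ) : AddSubgroup (Matrix (Fin m) (Fin m) R) where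
  carrier := {M | ∀ i j : Fin m, (j : ℕ) < i + k → M i j = 0}
  zero_mem' _ _ _ := rfl
  add_mem' hM hN i j hij := by rw [add_apply, hM i j hij, hN i j hij, add_zero]
  neg_mem' hM i j hij := by rw [neg_apply, hM i j hij, neg_zero]

variable {R m}

lemma isDescendingRingFiltration_strictUpperFiltration :
    IsDescendingRingFiltration (strictUpperFiltration R m) where
  antitone _ _ hkl _ hM i j hij := hM i j (by omega)
  mul_mem {k l M N} hM hN i j hij := by
    rw [mul_apply]
    refine Finset.sum_eq_zero fun r _ => ?_
    by_cases hr : (r : ℕ) < i + k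
    · rw [hM i r hr, zero_mul]
    · rw [hN r j (by omega), mul_zero]

lemma strictUpperFiltration_self : strictUpperFiltration R m m = ⊥ :=
  eq_bot_iff.mpr fun M hM => (AddSubgroup.mem_bot).mpr <| ext fun i j => hM i j (by omega)

lemma mem_strictUpperFiltration_of_nsmul_mem [IsAddTorsionFree R] {k n : ℕ} (hn : n ≠ 0)
    {M : Matrix (Fin m) (Fin m) R} (hM : n • M ∈ strictUpperFiltration R m k) :
    M ∈ strictUpperFiltration R m k := fun i j hij => by
  have := hM i j hij
  rw [smul_apply, nsmul_eq_zero_iff] at this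
  exact this.resolve_right hn

end Matrix

namespace FreeGroup

variable {α : Type*}

def IsSyllableForm (s : List (α × ℤ)) : Prop :=
  (s.map Prod.fst).IsChain (· ≠ ·) ∧ ∀ p ∈ s, p.2 ≠ 0

def ofSyllables (s : List (α × ℤ)) : FreeGroup α :=
  (s.map fun p => of p.1 ^ p.2).prod

lemma isSyllableForm_cons {a : α} {e : ℤ} {s : List (α × ℤ)} :
    IsSyllableForm ((a, e) :: s) ↔
      (∀ b ∈ (s.map Prod.fst).head?, a ≠ b) ∧ e ≠ 0 ∧ IsSyllableForm s := by
  simp only [IsSyllableForm, List.map_cons, List.isChain_cons, List.forall_mem_cons]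
  tauto

@[simp]
lemma ofSyllables_cons (a : α) (e : ℤ) (s : List (α × ℤ)) :
    ofSyllables ((a, e) :: s) = of a ^ e * ofSyllables s :=
  List.prod_cons

lemma exists_isSyllableForm_zpow_mul {s : List (α × ℤ)} (hs : IsSyllableForm s) (a : α)
    (e : ℤ) : ∃ t, IsSyllableForm t ∧ ofSyllables t = of a ^ e * ofSyllables s := by
  by_cases he : e = 0
  · exact ⟨s, hs, by simp [he]⟩
  obtain _ | ⟨⟨b, f⟩, s⟩ := s
  · exact ⟨[(a, e)], by simp [he, IsSyllableForm], rfl⟩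
  obtain ⟨hhead, -, hs'⟩ := isSyllableForm_cons.mp hs
  by_cases hab : a = b
  · subst hab
    have hmerge : of a ^ e * ofSyllables ((a, f) :: s) = of a ^ (e + f) * ofSyllables s := by
      rw [ofSyllables_cons, ← mul_assoc, ← zpow_add]
    by_cases hef : e + f = 0
    · exact ⟨s, hs', by rw [hmerge, hef, zpow_zero, one_mul]⟩
    · exact ⟨(a, e + f) :: s, isSyllableForm_cons.mpr ⟨hhead, hef, hs'⟩, hmerge.symm⟩
  · exact ⟨(a, e) :: (b, f) :: s, isSyllableForm_cons.mpr ⟨by simpa using hab, he, hs⟩, rfl⟩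

lemma exists_isSyllableForm (g : FreeGroup α) : ∃ s, IsSyllableForm s ∧ ofSyllables s = g := by
  have hg : g ∈ Subgroup.closure (Set.range of) := by simp [closure_range_of]
  induction hg using Subgroup.closure_induction_left with
  | one => exact ⟨[], by simp [IsSyllableForm], rfl⟩
  | mul_left _ ha _ _ ih =>
    obtain ⟨a, rfl⟩ := ha
    obtain ⟨s, hs, rfl⟩ := ih
    simpa using exists_isSyllableForm_zpow_mul hs a 1
  | inv_mul_cancel _ ha _ _ ih =>
    obtain ⟨a, rfl⟩ := ha
    obtain ⟨s, hs, rfl⟩ := ih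
    simpa using exists_isSyllableForm_zpow_mul hs a (-1)

variable [DecidableEq α] (w : List α)

/-- The image of the variable `X a` of Magnus' power series ring acting on the span of the
suffixes of `w`: it sends the suffix `w.drop (i + 1)` to `w.drop i` when `w[i] = a`. -/
def letterMatrix (a : α) : Matrix (Fin (w.length + 1)) (Fin (w.length + 1)) ℤ :=
  Matrix.of fun i j => if (j : ℕ) = i + 1 ∧ w[(i : ℕ)]? = some a then 1 else 0

lemma letterMatrix_mem (a : α) :
    letterMatrix w a ∈ Matrix.strictUpperFiltration ℤ (w.length + 1) 1 := fun i j hij => by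
  rw [letterMatrix, Matrix.of_apply, if_neg fun h => by omega]

lemma letterMatrix_mul_apply (a : α) (M : Matrix (Fin (w.length + 1)) (Fin (w.length + 1)) ℤ)
    (i j : Fin (w.length + 1)) :
    (letterMatrix w a * M) i j =
      if h : w[(i : ℕ)]? = some a then
        M ⟨i + 1, Nat.succ_lt_succ (List.getElem?_eq_some_iff.mp h).1⟩ j else 0 := by
  rw [Matrix.mul_apply]
  split_ifs with h
  · rw [Finset.sum_eq_single_of_mem ⟨i + 1, Nat.succ_lt_succ (List.getElem?_eq_some_iff.mp h).1⟩
      (Finset.mem_univ _)]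
    · simp [letterMatrix, h]
    · intro l _ hl
      simp only [letterMatrix, Matrix.of_apply, h, and_true]
      rw [if_neg fun h' => hl (Fin.ext h'), zero_mul]
  · exact Finset.sum_eq_zero fun l _ => by simp [letterMatrix, h]

lemma letterMatrix_mul_self {w : List α} (hw : w.IsChain (· ≠ ·)) (a : α) :
    letterMatrix w a * letterMatrix w a = 0 := by
  ext i j
  rw [letterMatrix_mul_apply]
  split_ifs with h
  · simp only [letterMatrix, Matrix.of_apply, Matrix.zero_apply, ite_eq_right_iff]
    rintro ⟨-, h'⟩
    obtain ⟨hi, rfl⟩ := List.getElem?_eq_some_iff.mp h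
    obtain ⟨hi', h'⟩ := List.getElem?_eq_some_iff.mp h'
    exact absurd h'.symm (hw.getElem i hi')
  · rfl

def syllablesMatrix (t : List (α × ℤ)) : Matrix (Fin (w.length + 1)) (Fin (w.length + 1)) ℤ :=
  (t.map fun p => 1 + p.2 • letterMatrix w p.1).prod

lemma syllablesMatrix_cons (a : α) (e : ℤ) (t : List (α × ℤ)) :
    syllablesMatrix w ((a, e) :: t) = (1 + e • letterMatrix w a) * syllablesMatrix w t :=
  List.prod_cons

lemma syllablesMatrix_apply_eq_zero {t : List (α × ℤ)} {i j : Fin (w.length + 1)}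
    (h : (i : ℕ) + t.length < j) : syllablesMatrix w t i j = 0 := by
  induction t generalizing i with
  | nil => exact Matrix.one_apply_ne (Fin.ne_of_lt (by simpa using h))
  | cons p t ih =>
    obtain ⟨a, e⟩ := p
    rw [List.length_cons] at h
    rw [syllablesMatrix_cons, add_mul, one_mul, Matrix.add_apply, smul_mul_assoc,
      Matrix.smul_apply, letterMatrix_mul_apply, ih (by omega)]
    split_ifs
    · rw [ih (by simp only; omega), smul_zero, add_zero]
    · rw [smul_zero, add_zero]

lemma syllablesMatrix_apply_of_prefix {t : List (α × ℤ)} {i j : Fin (w.length + 1)}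
    (ht : t.map Prod.fst <+: w.drop i) (hj : (j : ℕ) = i + t.length) :
    syllablesMatrix w t i j = (t.map Prod.snd).prod := by
  induction t generalizing i with
  | nil =>
    obtain rfl : j = i := Fin.ext (by simpa using hj)
    simp [syllablesMatrix]
  | cons p t ih =>
    obtain ⟨a, e⟩ := p
    rw [List.length_cons] at hj
    have hi : (i : ℕ) < w.length := by
      have := ht.length_le
      rw [List.length_map, List.length_cons, List.length_drop] at this
      omega
    rw [List.drop_eq_getElem_cons hi, List.map_cons, List.cons_prefix_cons] at ht
    have ha : w[(i : ℕ)]? = some a := by rw [List.getElem?_eq_getElem hi, ← ht.1]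
    rw [syllablesMatrix_cons, add_mul, one_mul, Matrix.add_apply, smul_mul_assoc,
      Matrix.smul_apply, letterMatrix_mul_apply, dif_pos ha,
      syllablesMatrix_apply_eq_zero w (by omega), ih ht.2 (by simp only; omega)]
    simp

variable {w : List α} (hw : w.IsChain (· ≠ ·))

def magnusRep : FreeGroup α →*
    (Matrix.isDescendingRingFiltration_strictUpperFiltration (R := ℤ)
      (m := w.length + 1)).principalUnits 1 :=
  lift fun a => ⟨Units.oneAddOfMulSelfEqZero (letterMatrix_mul_self hw a),
    by simpa [Units.oneAddOfMulSelfEqZero] using letterMatrix_mem w a,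
    by simpa [Units.oneAddOfMulSelfEqZero] using letterMatrix_mem w a⟩

lemma coe_magnusRep_ofSyllables (t : List (α × ℤ)) :
    ((magnusRep hw (ofSyllables t) : (Matrix (Fin (w.length + 1)) (Fin (w.length + 1)) ℤ)ˣ) :
      Matrix (Fin (w.length + 1)) (Fin (w.length + 1)) ℤ) = syllablesMatrix w t := by
  induction t with
  | nil => simp [ofSyllables, syllablesMatrix]
  | cons p t ih =>
    obtain ⟨a, e⟩ := p
    rw [ofSyllables_cons, _root_.map_mul, _root_.map_zpow, Subgroup.coe_mul, Subgroup.coe_zpow,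
      Units.val_mul, ih, syllablesMatrix_cons, magnusRep, lift_apply_of,
      Units.val_oneAddOfMulSelfEqZero_zpow]

lemma magnusRep_ofSyllables_ne_one {s : List (α × ℤ)} (hs : IsSyllableForm s) (hne : s ≠ []) :
    magnusRep hs.1 (ofSyllables s) ≠ 1 := by
  intro h
  have h' : syllablesMatrix (s.map Prod.fst) s 0 (Fin.last _) =
      (1 : Matrix (Fin ((s.map Prod.fst).length + 1)) (Fin ((s.map Prod.fst).length + 1)) ℤ)
        0 (Fin.last _) := by
    rw [← coe_magnusRep_ofSyllables hs.1, h]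
    rfl
  rw [syllablesMatrix_apply_of_prefix _ (by simp) (by simp),
    Matrix.one_apply_ne (by simpa [Fin.ext_iff, eq_comm] using hne)] at h'
  refine List.prod_ne_zero (fun h0 => ?_) h'
  obtain ⟨p, hp, hp0⟩ := List.mem_map.mp h0
  exact hs.2 p hp hp0

end FreeGroup

/-- Every free group is residually torsion-free nilpotent. -/
theorem stmt_13 (α : Type) :
    ∀ g : FreeGroup α, g ≠ 1 →
      ∃ (N : Type) (_ : Group N) (σ : FreeGroup α →* N),
        Group.IsNilpotent N ∧ (∀ g : N, g ≠ 1 → ¬IsOfFinOrder g) ∧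
          Function.Surjective σ ∧ σ g ≠ 1 := by
  classical
  intro g hg
  obtain ⟨s, hs, rfl⟩ := FreeGroup.exists_isSyllableForm g
  have hne : s ≠ [] := by rintro rfl; exact hg rfl
  let hI := Matrix.isDescendingRingFiltration_strictUpperFiltration (R := ℤ)
    (m := (s.map Prod.fst).length + 1)
  let ρ := FreeGroup.magnusRep hs.1
  have := hI.isNilpotent_principalUnits Matrix.strictUpperFiltration_self
  refine ⟨ρ.range, inferInstance, ρ.rangeRestrict, Subgroup.isNilpotent _, fun z hz hfin => ?_,
    ρ.rangeRestrict_surjective,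
    fun h => FreeGroup.magnusRep_ofSyllables_ne_one hs hne (congrArg Subtype.val h)⟩
  refine hz (Subtype.ext (Subtype.ext ?_))
  exact hI.eq_one_of_isOfFinOrder Matrix.strictUpperFiltration_self
    (fun hm _ h => Matrix.mem_strictUpperFiltration_of_nsmul_mem hm h) (z : hI.principalUnits 1).2
    (((hI.principalUnits 1).subtype.comp ρ.range.subtype).isOfFinOrder hfin)
end

section
/- Let N be a nilpotent group and y ∈ N. If y is conjugate in N to y⁻¹, then y² lies in γ₂(N), y⁴ in γ₃(N), and in general y^{2^i} ∈ γ_{i+1}(N); consequently, if N has nilpotency class c, then y^{2^c} = 1. -/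
/-!
If `x` inverts `y` by conjugation, it inverts every power `z` of `y`, and then
`z ^ 2 = z * (x⁻¹ z x)⁻¹ = ⁅z, x⁻¹⁆`. Taking `z = y ^ 2 ^ i`, squaring moves `y ^ 2 ^ i` from
`γ_{i+1}` into `γ_{i+2}`.
-/

open scoped commutatorElement

section

variable {G : Type*} [Group G]

theorem conj_pow_eq_inv_pow_of_conj_eq_inv {x y : G} (h : x⁻¹ * y * x = y⁻¹) (n : ℕ) :
    x⁻¹ * y ^ n * x = (y ^ n)⁻¹ := by
  calc x⁻¹ * y ^ n * x = (x⁻¹ * y * x⁻¹⁻¹) ^ n := by rw [conj_pow, inv_inv]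
    _ = (y ^ n)⁻¹ := by rw [inv_inv, h, inv_pow]

theorem sq_eq_commutatorElement_of_conj_eq_inv {x z : G} (h : x⁻¹ * z * x = z⁻¹) :
    z ^ 2 = ⁅z, x⁻¹⁆ := by
  calc z ^ 2 = z * (x⁻¹ * z * x)⁻¹ := by rw [h, inv_inv, sq]
    _ = ⁅z, x⁻¹⁆ := by group

theorem Subgroup.pow_two_pow_mem_lowerCentralSeries {S : Subgroup G} {x y : G} (hx : x ∈ S)
    (hy : y ∈ S) (h : x⁻¹ * y * x = y⁻¹) (i : ℕ) : y ^ 2 ^ i ∈ S.lowerCentralSeries i := by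
  induction i with
  | zero => simpa using hy
  | succ i ih =>
    rw [pow_succ, pow_mul, sq_eq_commutatorElement_of_conj_eq_inv
      (conj_pow_eq_inv_pow_of_conj_eq_inv h _), lowerCentralSeries_succ]
    exact commutator_mem_commutator ih (inv_mem hx)

end

/-- `(⊤ : Subgroup N).lowerCentralSeries i` is `γ_{i+1}(N)`. -/
theorem stmt_15 {N : Type*} [Group N] (y : N) (hconj : ∃ x : N, x⁻¹ * y * x = y⁻¹)
    (c : ℕ) (hc : (⊤ : Subgroup N).lowerCentralSeries c = ⊥) :
    (∀ i : ℕ, y ^ (2 ^ i) ∈ (⊤ : Subgroup N).lowerCentralSeries i) ∧ y ^ (2 ^ c) = 1 := by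
  obtain ⟨x, hx⟩ := hconj
  have hmem := Subgroup.pow_two_pow_mem_lowerCentralSeries (Subgroup.mem_top x)
    (Subgroup.mem_top y) hx
  exact ⟨hmem, by simpa [hc] using hmem c⟩
end
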